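/- arXiv:1809.07107 — 2 statements merged into one kernel-verified Lean document; each statement's English description precedes it below -/
import Mathlib

section
/- Assume K : 𝒳 → 𝒳 is merely continuous (not necessarily Lipschitz). For every j ∈ ℕ, every T ≥ 0, every L ≥ 0 and every ψ₀ ∈ 𝒳, the set 𝒵_j^{T,L} = { Z^j_t ψ₀ : 0 ≤ t ≤ T, u ∈ L¹([0,T];ℝ) with ‖u‖_{L¹([0,T])} ≤ L } is relatively compact in 𝒳, where Z^j_t ψ₀ = Y^{j+1}_t ψ₀ − Y^j_t ψ₀. -/
/-!
By induction on `p`, the iterates `Y^p_t ψ₀`, over `t ∈ [0,T]` and controls with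
`‖u‖_{L¹} ≤ L`, stay in a compact set `Q_p`. Given `Q_p`, the integrand of the recursion has the
form `u(s) • b(s) + c(s)` with `b(s)`, `c(s)` in the compact sets `S([0,T]) B(Q_p)` and
`S([0,T]) K(Q_p)`; these are compact because a strongly continuous family of operators is
uniformly bounded on `[0,T]` (Banach–Steinhaus), hence jointly continuous. Testing against
continuous linear functionals (Hahn–Banach) puts the integral in the closed convex hull of
`L • (±S([0,T]) B(Q_p) ∪ {0}) + T • (S([0,T]) K(Q_p) ∪ {0})`, which is compact by Mazur's theorem.
The increments `Y^{j+1}_t ψ₀ - Y^j_t ψ₀` then lie in the compact set `Q_{j+1} - Q_j`.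
-/

open MeasureTheory Set Filter Topology Pointwise

section

variable {𝕜 α E F : Type*} [NontriviallyNormedField 𝕜] [TopologicalSpace α]
  [NormedAddCommGroup E] [NormedSpace 𝕜 E] [CompleteSpace E]
  [NormedAddCommGroup F] [NormedSpace 𝕜 F]

theorem ContinuousLinearMap.continuousOn_uncurry_of_isCompact {A : α → E →L[𝕜] F} {s : Set α}
    (hs : IsCompact s) (hA : ∀ x, ContinuousOn (fun a => A a x) s) :
    ContinuousOn (fun p : α × E => A p.1 p.2) (s ×ˢ univ) := by
  obtain ⟨C, hC⟩ : ∃ C, ∀ a : s, ‖A a‖ ≤ C := banach_steinhaus fun x =>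
    (hs.exists_bound_of_continuousOn (hA x)).imp fun _ hC a => hC a a.2
  rintro ⟨a₀, x₀⟩ ⟨ha₀, -⟩
  have hsmall : Tendsto (fun p : α × E => A p.1 (p.2 - x₀)) (𝓝[s ×ˢ univ] (a₀, x₀)) (𝓝 0) := by
    have hbound : Tendsto (fun p : α × E => C * ‖p.2 - x₀‖) (𝓝 (a₀, x₀)) (𝓝 0) :=
      (continuous_const.mul (continuous_snd.sub continuous_const).norm).tendsto' _ _ (by simp)
    refine squeeze_zero_norm' ?_ (hbound.mono_left nhdsWithin_le_nhds)
    filter_upwards [self_mem_nhdsWithin] with p hp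
    exact (A p.1).le_of_opNorm_le (hC ⟨p.1, hp.1⟩) _
  have hmain : ContinuousWithinAt ((fun a => A a x₀) ∘ Prod.fst) (s ×ˢ univ) (a₀, x₀) :=
    (hA x₀ a₀ ha₀).comp continuousWithinAt_fst mapsTo_fst_prod
  rw [ContinuousWithinAt]
  simpa using hsmall.add hmain

theorem IsCompact.image2_clm_apply {A : α → E →L[𝕜] F} {s : Set α} {K : Set E}
    (hs : IsCompact s) (hA : ∀ x, ContinuousOn (fun a => A a x) s)
    (hK : IsCompact K) : IsCompact (image2 (fun a x => A a x) s K) := by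
  rw [← image_prod]
  exact (hs.prod hK).image_of_continuousOn
    ((ContinuousLinearMap.continuousOn_uncurry_of_isCompact hs hA).mono
      (prod_mono subset_rfl (subset_univ K)))

end

section

variable {E : Type*} [NormedAddCommGroup E] [NormedSpace ℝ E] [CompleteSpace E]

theorem IsCompact.closedConvexHull {s : Set E}
    (hs : IsCompact s) : IsCompact (closedConvexHull ℝ s) := by
  rw [closedConvexHull_eq_closure_convexHull]
  exact (totallyBounded_convexHull.2 hs.totallyBounded).closure.isCompact_of_isClosed
    isClosed_closure

/-- Adjoining `0` makes the maxima of functionals below nonnegative and covers the junk value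
`0` of a non-integrable integrand. -/
theorem intervalIntegral_smul_add_mem_closedConvexHull {P R : Set E} (hP : IsCompact P)
    (hR : IsCompact R) {u : ℝ → ℝ} {b c : ℝ → E} {t T L : ℝ} (ht : 0 ≤ t) (htT : t ≤ T)
    (hu : IntervalIntegrable u volume 0 t) (huL : ∫ s in (0:ℝ)..t, |u s| ≤ L)
    (hb : ∀ s ∈ Icc 0 t, b s ∈ P) (hc : ∀ s ∈ Icc 0 t, c s ∈ R) :
    ∫ s in (0:ℝ)..t, (u s • b s + c s) ∈
      closedConvexHull ℝ (L • insert 0 (P ∪ -P) + T • insert 0 R) := by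
  have h0 : (0 : E) ∈ L • insert 0 (P ∪ -P) + T • insert 0 R :=
    ⟨0, zero_mem_smul_set (mem_insert 0 _), 0, zero_mem_smul_set (mem_insert 0 _), add_zero 0⟩
  by_cases hg : IntervalIntegrable (fun s => u s • b s + c s) volume 0 t
  swap
  · rw [intervalIntegral.integral_undef hg]
    exact subset_closedConvexHull h0
  rw [← iInter_halfSpaces_eq convex_closedConvexHull isClosed_closedConvexHull, mem_iInter]
  intro φ
  obtain ⟨p, hp, hp_max⟩ := (isCompact_singleton.union (hP.union hP.neg)).exists_isMaxOn
    (insert_nonempty 0 _) φ.continuous.continuousOn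
  obtain ⟨r, hr, hr_max⟩ := (isCompact_singleton.union hR).exists_isMaxOn
    (insert_nonempty 0 _) φ.continuous.continuousOn
  refine ⟨L • p + T • r, subset_closedConvexHull
    (add_mem_add (smul_mem_smul_set hp) (smul_mem_smul_set hr)), ?_⟩
  have hp₀ : 0 ≤ φ p := by simpa using hp_max (mem_insert 0 _)
  have hr₀ : 0 ≤ φ r := by simpa using hr_max (mem_insert 0 _)
  have hpoint : ∀ s ∈ Icc 0 t, φ (u s • b s + c s) ≤ |u s| * φ p + φ r := by
    intro s hs
    have hub : u s * φ (b s) ≤ |u s| * φ p := by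
      rcases le_or_gt 0 (u s) with hu₀ | hu₀
      · rw [abs_of_nonneg hu₀]
        exact mul_le_mul_of_nonneg_left (hp_max (Or.inr (Or.inl (hb s hs)))) hu₀
      · rw [abs_of_neg hu₀, ← neg_mul_neg, ← map_neg]
        exact mul_le_mul_of_nonneg_left (hp_max (Or.inr (Or.inr (by simpa using hb s hs))))
          (neg_nonneg.2 hu₀.le)
    have hcr : φ (c s) ≤ φ r := hr_max (Or.inr (hc s hs))
    simpa using add_le_add hub hcr
  calc φ (∫ s in (0:ℝ)..t, (u s • b s + c s))
      = ∫ s in (0:ℝ)..t, φ (u s • b s + c s) := (φ.intervalIntegral_comp_comm hg).symm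
    _ ≤ ∫ s in (0:ℝ)..t, (|u s| * φ p + φ r) :=
      intervalIntegral.integral_mono_on ht ⟨φ.integrable_comp hg.1, φ.integrable_comp hg.2⟩
        ((hu.abs.mul_const _).add intervalIntegrable_const) hpoint
    _ = (∫ s in (0:ℝ)..t, |u s|) * φ p + t * φ r := by
      rw [intervalIntegral.integral_add (hu.abs.mul_const _) intervalIntegrable_const,
        intervalIntegral.integral_mul_const, intervalIntegral.integral_const, sub_zero,
        smul_eq_mul]
    _ ≤ L * φ p + T * φ r := by gcongr
    _ = φ (L • p + T • r) := by simp

end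

theorem intervalIntegral_abs_le_of_integrableOn_Icc {u : ℝ → ℝ} {t T : ℝ}
    (hu : IntegrableOn u (Icc 0 T)) (ht : t ∈ Icc 0 T) :
    ∫ s in (0:ℝ)..t, |u s| ≤ ∫ s in (0:ℝ)..T, |u s| :=
  intervalIntegral.integral_mono_interval le_rfl ht.1 ht.2 (ae_of_all _ fun s => abs_nonneg _)
    ((intervalIntegrable_iff_integrableOn_Icc_of_le (ht.1.trans ht.2)).2 hu).abs

def picardIterateSet {X : Type*} (Y : (ℝ → ℝ) → ℕ → ℝ → X) (p : ℕ) (T L : ℝ) : Set X :=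
  {x | ∃ t ∈ Icc (0:ℝ) T, ∃ u : ℝ → ℝ,
    IntegrableOn u (Icc (0:ℝ) T) ∧ (∫ s in (0:ℝ)..T, |u s|) ≤ L ∧ x = Y u p t}

theorem isCompact_closure_picardIterateSet {X : Type*} [NormedAddCommGroup X] [NormedSpace ℝ X]
    [CompleteSpace X] (S : ℝ → X →L[ℝ] X)
    (hScont : ∀ x : X, ContinuousOn (fun t => S t x) (Ici (0:ℝ)))
    (B : X →L[ℝ] X) (K : X → X) (hK : Continuous K) (ψ₀ : X) (Y : (ℝ → ℝ) → ℕ → ℝ → X)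
    (hY0 : ∀ u : ℝ → ℝ, ∀ t : ℝ, Y u 0 t = 0)
    (hYrec : ∀ u : ℝ → ℝ, ∀ p : ℕ, ∀ t : ℝ, 0 ≤ t →
      Y u (p + 1) t = S t ψ₀ + ∫ s in (0:ℝ)..t,
        (u s • S (t - s) (B (Y u p s)) + S (t - s) (K (Y u p s))))
    (T L : ℝ) (p : ℕ) : IsCompact (closure (picardIterateSet Y p T L)) := by
  have hScontT : ∀ x, ContinuousOn (fun t => S t x) (Icc 0 T) := fun x =>
    (hScont x).mono Icc_subset_Ici_self
  induction p with
  | zero =>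
    refine (isCompact_singleton (x := (0 : X))).closure_of_subset ?_
    rintro _ ⟨t, -, u, -, -, rfl⟩
    exact hY0 u t
  | succ p ih =>
    set Q := closure (picardIterateSet Y p T L)
    set P := image2 (fun τ x => S τ x) (Icc 0 T) (B '' Q)
    set R := image2 (fun τ x => S τ x) (Icc 0 T) (K '' Q)
    have hP : IsCompact P := isCompact_Icc.image2_clm_apply hScontT (ih.image B.continuous)
    have hR : IsCompact R := isCompact_Icc.image2_clm_apply hScontT (ih.image hK)
    have hD : IsCompact (L • insert 0 (P ∪ -P) + T • insert 0 R) :=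
      ((isCompact_singleton.union (hP.union hP.neg)).smul L).add
        ((isCompact_singleton.union hR).smul T)
    refine ((isCompact_Icc.image_of_continuousOn (hScontT ψ₀)).add
      hD.closedConvexHull).closure_of_subset ?_
    rintro _ ⟨t, ht, u, hu, huL, rfl⟩
    have hu_t : IntervalIntegrable u volume 0 t :=
      (intervalIntegrable_iff_integrableOn_Icc_of_le ht.1).2
        (hu.mono_set (Icc_subset_Icc_right ht.2))
    have huL_t : ∫ s in (0:ℝ)..t, |u s| ≤ L :=
      (intervalIntegral_abs_le_of_integrableOn_Icc hu ht).trans huL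
    have hlag : ∀ s ∈ Icc 0 t, t - s ∈ Icc 0 T ∧ Y u p s ∈ Q := fun s hs =>
      ⟨⟨by linarith [hs.2], by linarith [hs.1, ht.2]⟩,
        subset_closure ⟨s, ⟨hs.1, hs.2.trans ht.2⟩, u, hu, huL, rfl⟩⟩
    rw [hYrec u p t ht.1]
    exact add_mem_add (mem_image_of_mem _ ht)
      (intervalIntegral_smul_add_mem_closedConvexHull hP hR ht.1 ht.2 hu_t huL_t
        (fun s hs => mem_image2_of_mem (hlag s hs).1 (mem_image_of_mem B (hlag s hs).2))
        (fun s hs => mem_image2_of_mem (hlag s hs).1 (mem_image_of_mem K (hlag s hs).2)))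

theorem dyson_increment_set_relatively_compact_general
    {X : Type*} [NormedAddCommGroup X] [NormedSpace ℝ X] [CompleteSpace X]
    (S : ℝ → X →L[ℝ] X)
    (hScont : ∀ x : X, ContinuousOn (fun t => S t x) (Ici (0:ℝ)))
    (B : X →L[ℝ] X) (K : X → X) (hK : Continuous K)
    (ψ₀ : X)
    -- the Picard/Dyson iterates `Y u p t = Y^p_t ψ₀` for the control `u`
    (Y : (ℝ → ℝ) → ℕ → ℝ → X)
    (hY0 : ∀ u : ℝ → ℝ, ∀ t : ℝ, Y u 0 t = 0)
    (hYrec : ∀ u : ℝ → ℝ, ∀ p : ℕ, ∀ t : ℝ, 0 ≤ t →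
      Y u (p + 1) t = S t ψ₀ + ∫ s in (0:ℝ)..t,
        (u s • S (t - s) (B (Y u p s)) + S (t - s) (K (Y u p s))))
    (j : ℕ) (T L : ℝ) :
    IsCompact (closure { x : X | ∃ t ∈ Icc (0:ℝ) T, ∃ u : ℝ → ℝ,
      IntegrableOn u (Icc (0:ℝ) T) ∧ (∫ s in (0:ℝ)..T, |u s|) ≤ L ∧
      x = Y u (j + 1) t - Y u j t }) := by
  have hY := isCompact_closure_picardIterateSet S hScont B K hK ψ₀ Y hY0 hYrec T L
  refine ((hY (j + 1)).add (hY j).neg).closure_of_subset ?_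
  rintro _ ⟨t, ht, u, hu, huL, rfl⟩
  rw [sub_eq_add_neg]
  exact add_mem_add (subset_closure ⟨t, ht, u, hu, huL, rfl⟩)
    (neg_mem_neg.2 (subset_closure ⟨t, ht, u, hu, huL, rfl⟩))

/-- with `K` merely continuous, for every `j ∈ ℕ`, `T ≥ 0`, `L ≥ 0` and
`ψ₀ ∈ X`, the set `𝒵_j^{T,L} = { Z^j_t ψ₀ : 0 ≤ t ≤ T, ‖u‖_{L¹([0,T])} ≤ L }`, where
`Z^j_t ψ₀ = Y^{j+1}_t ψ₀ − Y^j_t ψ₀`, is relatively compact in `X`. -/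
theorem dyson_increment_set_relatively_compact
    {X : Type*} [NormedAddCommGroup X] [NormedSpace ℝ X] [CompleteSpace X]
    (S : ℝ → X →L[ℝ] X)
    (hS0 : S 0 = ContinuousLinearMap.id ℝ X)
    (hSadd : ∀ s t : ℝ, 0 ≤ s → 0 ≤ t → S (s + t) = (S s).comp (S t))
    (hScont : ∀ x : X, ContinuousOn (fun t => S t x) (Ici (0:ℝ)))
    (M ω : ℝ) (hM : 0 < M) (hω : 0 ≤ ω)
    (hSbound : ∀ t : ℝ, 0 ≤ t → ‖S t‖ ≤ M * Real.exp (ω * t))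
    (B : X →L[ℝ] X) (K : X → X) (hK : Continuous K)
    (ψ₀ : X)
    -- the Picard/Dyson iterates `Y u p t = Y^p_t ψ₀` for the control `u`
    (Y : (ℝ → ℝ) → ℕ → ℝ → X)
    (hY0 : ∀ u : ℝ → ℝ, ∀ t : ℝ, Y u 0 t = 0)
    (hYrec : ∀ u : ℝ → ℝ, ∀ p : ℕ, ∀ t : ℝ, 0 ≤ t →
      Y u (p + 1) t = S t ψ₀ + ∫ s in (0:ℝ)..t,
        (u s • S (t - s) (B (Y u p s)) + S (t - s) (K (Y u p s))))
    (j : ℕ) (T L : ℝ) (hT : 0 ≤ T) (hL : 0 ≤ L) :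
    IsCompact (closure { x : X | ∃ t ∈ Icc (0:ℝ) T, ∃ u : ℝ → ℝ,
      IntegrableOn u (Icc (0:ℝ) T) ∧ (∫ s in (0:ℝ)..T, |u s|) ≤ L ∧
      x = Y u (j + 1) t - Y u j t }) :=
  dyson_increment_set_relatively_compact_general S hScont B K hK ψ₀ Y hY0 hYrec j T L
end

section
/- Let 𝒳 be a real Banach space, C ⊆ 𝒳 a relatively compact set, and T, L > 0. Then the set of all vectors of the form ∫₀ᵗ u(s) g(s) ds, where t ∈ [0,T], u ∈ L¹([0,T];ℝ) with ‖u‖_{L¹([0,T])} ≤ L, and g : [0,T] → 𝒳 is continuous with g(s) ∈ C for all s, is relatively compact in 𝒳. -/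
/-!
Write `u • g = |u| • f` with `f = ±g` taking values in `C ∪ -C`. Then `∫ u • g` is the total
mass `∫ |u| ≤ L` of the measure `|u| ds` times the `|u| ds`-average of `f`, and by Jensen that
average lies in the closed convex hull of `C ∪ -C`. This hull is compact, since `C` is totally
bounded and `X` is complete, so every such integral lies in the compact set
`[0, L] • closedConvexHull ℝ (C ∪ -C)`.
-/

open MeasureTheory Set
open scoped Pointwise

section
variable {α E : Type*} [MeasurableSpace α] [NormedAddCommGroup E] [NormedSpace ℝ E]
  [CompleteSpace E]

theorem Convex.integral_smul_mem_smul {μ : Measure α} {K : Set E} (hK : Convex ℝ K)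
    (hKc : IsClosed K) (hKne : K.Nonempty) {w : α → ℝ} {f : α → E} (hw : 0 ≤ᵐ[μ] w)
    (hwi : Integrable w μ) (hf : ∀ᵐ x ∂μ, f x ∈ K)
    (hwf : Integrable (fun x => w x • f x) μ) :
    ∫ x, w x • f x ∂μ ∈ (∫ x, w x ∂μ) • K := by
  set ν := μ.withDensity fun x => ENNReal.ofReal (w x)
  have hwm : AEMeasurable (fun x => ENNReal.ofReal (w x)) μ := hwi.aemeasurable.ennreal_ofReal
  have hw_toReal : ∀ᵐ x ∂μ, (ENNReal.ofReal (w x)).toReal • f x = w x • f x := by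
    filter_upwards [hw] with x hx
    rw [ENNReal.toReal_ofReal hx]
  have hw_fin : ∀ᵐ x ∂μ, ENNReal.ofReal (w x) < ⊤ := ae_of_all _ fun _ => ENNReal.ofReal_lt_top
  have hν_integral : ∫ x, f x ∂ν = ∫ x, w x • f x ∂μ :=
    (integral_withDensity_eq_integral_toReal_smul₀ hwm hw_fin f).trans
      (integral_congr_ae hw_toReal)
  have hν_univ : ν univ = ENNReal.ofReal (∫ x, w x ∂μ) := by
    rw [withDensity_apply _ MeasurableSet.univ, Measure.restrict_univ,
      ofReal_integral_eq_lintegral_ofReal hwi hw]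
  have : IsFiniteMeasure ν := ⟨hν_univ ▸ ENNReal.ofReal_lt_top⟩
  have hν_real : ν.real univ = ∫ x, w x ∂μ := by
    rw [measureReal_def, hν_univ, ENNReal.toReal_ofReal (integral_nonneg_of_ae hw)]
  rw [← hν_integral, ← measure_smul_average (μ := ν), ← hν_real]
  rcases eq_zero_or_neZero ν with hν | hν
  · obtain ⟨k, hk⟩ := hKne
    simpa [hν] using smul_mem_smul_set (a := (0 : ℝ)) hk
  · refine smul_mem_smul_set (hK.average_mem hKc ?_ ?_)
    · exact (withDensity_absolutelyContinuous _ _).ae_le hf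
    · rw [integrable_withDensity_iff_integrable_smul₀' hwm hw_fin]
      exact hwf.congr (hw_toReal.mono fun x hx => hx.symm)

theorem TotallyBounded.isCompact_closedConvexHull {s : Set E} (hs : TotallyBounded s) :
    IsCompact (closedConvexHull ℝ s) := by
  rw [closedConvexHull_eq_closure_convexHull]
  exact (totallyBounded_convexHull.mpr hs).closure.isCompact_of_isClosed isClosed_closure

theorem integral_smul_mem_integral_abs_smul_closedConvexHull {μ : Measure α} {C : Set E}
    (hC : C.Nonempty) {u : α → ℝ} {g : α → E} (hu : Integrable u μ)
    (hg : ∀ᵐ x ∂μ, g x ∈ C)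
    (hug : Integrable (fun x => u x • g x) μ) :
    ∫ x, u x • g x ∂μ ∈ (∫ x, |u x| ∂μ) • closedConvexHull ℝ (C ∪ -C) := by
  set f : α → E := fun x => if 0 ≤ u x then g x else -g x
  have habs_smul : ∀ x, |u x| • f x = u x • g x := by
    intro x
    by_cases h : 0 ≤ u x
    · simp [f, h, abs_of_nonneg h]
    · simp [f, h, abs_of_neg (not_le.mp h)]
  have hf : ∀ᵐ x ∂μ, f x ∈ closedConvexHull ℝ (C ∪ -C) := by
    filter_upwards [hg] with x hx
    refine subset_closedConvexHull ?_
    by_cases h : 0 ≤ u x <;> simp [f, h, hx]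
  simpa only [habs_smul] using
    convex_closedConvexHull.integral_smul_mem_smul isClosed_closedConvexHull
      ((hC.mono subset_union_left).mono subset_closedConvexHull)
      (ae_of_all _ fun x => abs_nonneg (u x)) hu.abs hf (by simpa only [habs_smul] using hug)

end

theorem integral_image_relatively_compact_general
    {X : Type*} [NormedAddCommGroup X] [NormedSpace ℝ X] [CompleteSpace X]
    (C : Set X) (hC : IsCompact (closure C)) (T L : ℝ) :
    IsCompact (closure { x : X | ∃ t ∈ Icc (0:ℝ) T, ∃ u : ℝ → ℝ,
      IntegrableOn u (Icc (0:ℝ) T) ∧ (∫ s in (0:ℝ)..T, |u s|) ≤ L ∧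
      ∃ g : ℝ → X, ContinuousOn g (Icc (0:ℝ) T) ∧ (∀ s ∈ Icc (0:ℝ) T, g s ∈ C) ∧
      x = ∫ s in (0:ℝ)..t, u s • g s }) := by
  have hCC : TotallyBounded (C ∪ -C) := (hC.union hC.neg).totallyBounded.subset
    (union_subset_union subset_closure (neg_subset_neg.mpr subset_closure))
  have hbound : IsCompact (Icc 0 L • closedConvexHull ℝ (C ∪ -C)) := 
    isCompact_Icc.smul_set hCC.isCompact_closedConvexHull
  refine hbound.of_isClosed_subset isClosed_closure (closure_minimal ?_ hbound.isClosed)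
  rintro x ⟨t, ⟨ht0, htT⟩, u, hu, huL, g, hg, hgC, rfl⟩
  have hsub : Ioc 0 t ⊆ Icc 0 T := fun s hs => ⟨hs.1.le, hs.2.trans htT⟩
  obtain ⟨k, hk, hx⟩ := integral_smul_mem_integral_abs_smul_closedConvexHull
    ⟨g 0, hgC 0 ⟨le_rfl, ht0.trans htT⟩⟩ (hu.mono_set hsub)
    (ae_restrict_of_forall_mem measurableSet_Ioc fun s hs => hgC s (hsub hs))
    ((hu.smul_continuousOn hg isCompact_Icc).mono_set hsub)
  have habs_le : ∫ s in Ioc 0 t, |u s| ≤ L :=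
    calc ∫ s in Ioc 0 t, |u s| ≤ ∫ s in Ioc 0 T, |u s| :=
          setIntegral_mono_set (IntegrableOn.mono_set hu.abs Ioc_subset_Icc_self)
            (ae_of_all _ fun s => abs_nonneg (u s)) (Ioc_subset_Ioc_right htT).eventuallyLE
      _ = ∫ s in (0:ℝ)..T, |u s| := (intervalIntegral.integral_of_le (ht0.trans htT)).symm
      _ ≤ L := huL
  rw [intervalIntegral.integral_of_le ht0, ← hx]
  exact smul_mem_smul ⟨integral_nonneg fun s => abs_nonneg (u s), habs_le⟩ hk

/-- if `C ⊆ X` is relatively compact and `T, L > 0`, then the set of all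
vectors `∫₀ᵗ u(s) g(s) ds`, with `t ∈ [0,T]`, `u ∈ L¹([0,T]; ℝ)` such that
`‖u‖_{L¹([0,T])} ≤ L`, and `g : [0,T] → X` continuous with values in `C`, is relatively
compact in `X`. -/
theorem integral_image_relatively_compact
    {X : Type*} [NormedAddCommGroup X] [NormedSpace ℝ X] [CompleteSpace X]
    (C : Set X) (hC : IsCompact (closure C)) (T L : ℝ) (hT : 0 < T) (hL : 0 < L) :
    IsCompact (closure { x : X | ∃ t ∈ Icc (0:ℝ) T, ∃ u : ℝ → ℝ,
      IntegrableOn u (Icc (0:ℝ) T) ∧ (∫ s in (0:ℝ)..T, |u s|) ≤ L ∧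
      ∃ g : ℝ → X, ContinuousOn g (Icc (0:ℝ) T) ∧ (∀ s ∈ Icc (0:ℝ) T, g s ∈ C) ∧
      x = ∫ s in (0:ℝ)..t, u s • g s }) :=
  integral_image_relatively_compact_general C hC T L
end
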